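/- Let M ≥ 1, let g_1, …, g_M and g̃_1, …, g̃_M be real numbers and γ ≥ 0. Define ρ(φ) = (1/2π)[ 1 + 2γ Σ_{n=1}^{M} ( g_n cos(nφ) + g̃_n sin(nφ) ) ]. Then ∫_{-π}^{π} ρ(φ) dφ = 1, and for every φ ∈ ℝ the saddle point equation holds: 2γ Σ_{n=1}^{M} [ −g_n sin(nφ) + g̃_n cos(nφ) ] + lim_{ε→0⁺} ∫_{{θ : ε ≤ |φ−θ| ≤ π}} ρ(θ) cot((φ−θ)/2) dθ = 0. -/

import Mathlib

open MeasureTheory Filter intervalIntegral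

private lemma sin_half_ne {x : ℝ} (h1 : 0 < x) (h2 : x ≤ Real.pi) : Real.sin (x / 2) ≠ 0 :=
  ne_of_gt (Real.sin_pos_of_pos_of_lt_pi (by linarith) (by linarith [Real.pi_pos]))

private lemma int_cos_mul {c : ℝ} (hc : c ≠ 0) (a b : ℝ) :
    ∫ x in a..b, Real.cos (c * x) = (Real.sin (c * b) - Real.sin (c * a)) / c := by
  rw [intervalIntegral.integral_comp_mul_left (fun x => Real.cos x) hc,
    integral_cos, smul_eq_mul, inv_mul_eq_div]

private lemma int_sin_mul {c : ℝ} (hc : c ≠ 0) (a b : ℝ) :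
    ∫ x in a..b, Real.sin (c * x) = (Real.cos (c * a) - Real.cos (c * b)) / c := by
  rw [intervalIntegral.integral_comp_mul_left (fun x => Real.sin x) hc,
    integral_sin, smul_eq_mul, inv_mul_eq_div]

private noncomputable def Dker (n : ℕ) (x : ℝ) : ℝ :=
  (∑ k ∈ Finset.range n, Real.cos (k * x)) + ∑ k ∈ Finset.Icc 1 n, Real.cos (k * x)

private lemma cos_k_cont (k : ℕ) : Continuous fun x : ℝ => Real.cos (k * x) := by
  fun_prop

private lemma sin_k_cont (k : ℕ) : Continuous fun x : ℝ => Real.sin (k * x) := by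
  fun_prop

private lemma Dker_cont (n : ℕ) : Continuous (Dker n) := by
  unfold Dker
  exact (continuous_finset_sum _ fun k _ => cos_k_cont k).add
    (continuous_finset_sum _ fun k _ => cos_k_cont k)

private lemma sin_mul_cot (n : ℕ) {x : ℝ} (hx : Real.sin (x / 2) ≠ 0) :
    Real.sin (n * x) * (Real.cos (x / 2) / Real.sin (x / 2)) = Dker n x := by
  induction n with
  | zero => simp [Dker]
  | succ n ih =>
    have hD : Dker (n + 1) x
        = Dker n x + (Real.cos ((n : ℝ) * x) + Real.cos (((n : ℝ) + 1) * x)) := by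
      unfold Dker
      rw [Finset.sum_range_succ, Finset.sum_Icc_succ_top (by omega : 1 ≤ n + 1)]
      push_cast
      ring
    have hx2 : (((n : ℝ) + 1) * x) = (n : ℝ) * x + 2 * (x / 2) := by ring
    have hkey : Real.sin (((n : ℝ) + 1) * x) * Real.cos (x / 2)
        = Real.sin ((n : ℝ) * x) * Real.cos (x / 2)
          + (Real.cos ((n : ℝ) * x) + Real.cos (((n : ℝ) + 1) * x)) * Real.sin (x / 2) := by
      rw [hx2, Real.sin_add, Real.cos_add, Real.sin_two_mul, Real.cos_two_mul]
      linear_combination (2 * Real.sin ((n : ℝ) * x) * Real.cos (x / 2)) *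
        Real.sin_sq_add_cos_sq (x / 2)
    have hcast : ((n + 1 : ℕ) : ℝ) = (n : ℝ) + 1 := by push_cast; ring
    rw [hD, ← ih, hcast]
    field_simp
    linear_combination hkey

private lemma K_cont (n : ℕ) : Continuous fun ε : ℝ => ∫ x in ε..Real.pi, Dker n x := by
  have h : ∀ a b : ℝ, IntervalIntegrable (Dker n) volume a b := fun a b =>
    (Dker_cont n).intervalIntegrable a b
  have heq : (fun ε : ℝ => ∫ x in ε..Real.pi, Dker n x)
      = fun ε : ℝ => -∫ x in Real.pi..ε, Dker n x := by
    funext ε; rw [intervalIntegral.integral_symm]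
  rw [heq]
  exact (intervalIntegral.continuous_primitive h Real.pi).neg

private lemma K_zero (n : ℕ) (hn : 1 ≤ n) : ∫ x in (0:ℝ)..Real.pi, Dker n x = Real.pi := by
  have hval : ∀ k : ℕ, (∫ x in (0:ℝ)..Real.pi, Real.cos (k * x))
      = if k = 0 then Real.pi else 0 := by
    intro k
    rcases Nat.eq_zero_or_pos k with h | h
    · simp [h]
    · have hk : (k : ℝ) ≠ 0 := Nat.cast_ne_zero.mpr h.ne'
      rw [int_cos_mul hk]
      simp [Real.sin_nat_mul_pi, h.ne']
  unfold Dker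
  rw [intervalIntegral.integral_add
      ((continuous_finset_sum _ fun k _ => cos_k_cont k).intervalIntegrable _ _)
      ((continuous_finset_sum _ fun k _ => cos_k_cont k).intervalIntegrable _ _),
    intervalIntegral.integral_finset_sum (fun k _ => (cos_k_cont k).intervalIntegrable _ _),
    intervalIntegral.integral_finset_sum (fun k _ => (cos_k_cont k).intervalIntegrable _ _)]
  simp only [hval]
  rw [Finset.sum_ite_eq' (Finset.range n) 0 (fun _ => Real.pi)]
  rw [Finset.sum_eq_zero (fun k hk => if_neg (by
    have := (Finset.mem_Icc.mp hk).1; omega))]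
  rw [if_pos (Finset.mem_range.mpr (by omega : 0 < n)), add_zero]

private noncomputable def rho (M : ℕ) (g gt : ℕ → ℝ) (γ : ℝ) (θ : ℝ) : ℝ :=
  (1 / (2 * Real.pi)) *
    (1 + 2 * γ * ∑ n ∈ Finset.Icc 1 M, (g n * Real.cos (n * θ) + gt n * Real.sin (n * θ)))

private lemma term_cont (g gt : ℕ → ℝ) (n : ℕ) :
    Continuous fun θ : ℝ => g n * Real.cos (n * θ) + gt n * Real.sin (n * θ)  :=
  (continuous_const.mul (cos_k_cont n)).add
    (continuous_const.mul (sin_k_cont n))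

private lemma rho_cont (M : ℕ) (g gt : ℕ → ℝ) (γ : ℝ) : Continuous (rho M g gt γ) := by
  unfold rho
  exact continuous_const.mul (continuous_const.add (continuous_const.mul
    (continuous_finset_sum _ fun n _ => term_cont g gt n)))

private lemma rho_norm (M : ℕ) (g gt : ℕ → ℝ) (γ : ℝ) :
    (∫ φ in (-Real.pi)..Real.pi, rho M g gt γ φ) = 1 := by
  have key : ∀ n ∈ Finset.Icc 1 M,
      (∫ φ in (-Real.pi)..Real.pi, (g n * Real.cos (n * φ) + gt n * Real.sin (n * φ))) = 0 := by
    intro n hn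
    have h1 : 1 ≤ n := (Finset.mem_Icc.mp hn).1
    have hk : (n : ℝ) ≠ 0 := Nat.cast_ne_zero.mpr (by omega)
    rw [intervalIntegral.integral_add
        (((cos_k_cont n).intervalIntegrable _ _).const_mul (g n))
        (((sin_k_cont n).intervalIntegrable _ _).const_mul (gt n)),
      intervalIntegral.integral_const_mul, intervalIntegral.integral_const_mul,
      int_cos_mul hk, int_sin_mul hk]
    have h2 : Real.sin ((n : ℝ) * Real.pi) = 0 := Real.sin_nat_mul_pi n
    have h3 : Real.sin ((n : ℝ) * (-Real.pi)) = 0 := by rw [mul_neg, Real.sin_neg, h2, neg_zero]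
    have h4 : Real.cos ((n : ℝ) * (-Real.pi)) = Real.cos ((n : ℝ) * Real.pi) := by
      rw [mul_neg, Real.cos_neg]
    rw [h2, h3, h4]
    ring
  unfold rho
  rw [intervalIntegral.integral_const_mul,
    intervalIntegral.integral_add intervalIntegrable_const
      (((continuous_finset_sum _ fun n _ => term_cont g gt n).intervalIntegrable _ _).const_mul
        (2 * γ)),
    intervalIntegral.integral_const_mul,
    intervalIntegral.integral_finset_sum (fun n hn => (term_cont g gt n).intervalIntegrable _ _),
    Finset.sum_congr rfl key]
  simp only [Finset.sum_const_zero, mul_zero, add_zero, intervalIntegral.integral_const,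
    smul_eq_mul, mul_one]
  have : Real.pi - -Real.pi = 2 * Real.pi := by ring
  rw [this]
  field_simp

private lemma saddle_repr (M : ℕ) (g gt : ℕ → ℝ) (γ : ℝ) (φ : ℝ) {ε : ℝ}
    (hε0 : 0 < ε) (hεπ : ε < Real.pi) :
    (∫ θ in {θ : ℝ | ε ≤ |φ - θ| ∧ |φ - θ| ≤ Real.pi},
        rho M g gt γ θ * (Real.cos ((φ - θ) / 2) / Real.sin ((φ - θ) / 2)))
      = ∑ n ∈ Finset.Icc 1 M,
          ((2 * γ / Real.pi) * (g n * Real.sin (n * φ) - gt n * Real.cos (n * φ))) *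
            ∫ x in ε..Real.pi, Dker n x := by
  have hπ := Real.pi_pos
  have hπ0 : Real.pi ≠ 0 := Real.pi_ne_zero
  have hset : {θ : ℝ | ε ≤ |φ - θ| ∧ |φ - θ| ≤ Real.pi}
      = Set.Icc (φ - Real.pi) (φ - ε) ∪ Set.Icc (φ + ε) (φ + Real.pi) := by
    ext θ
    simp only [Set.mem_setOf_eq, Set.mem_union, Set.mem_Icc, le_abs, abs_le]
    constructor
    · rintro ⟨h1 | h1, h2, h3⟩
      · left; constructor <;> linarith
      · right; constructor <;> linarith
    · rintro (⟨h1, h2⟩ | ⟨h1, h2⟩)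
      · exact ⟨Or.inl (by linarith), by linarith, by linarith⟩
      · exact ⟨Or.inr (by linarith), by linarith, by linarith⟩
  have hne1 : ∀ θ ∈ Set.Icc (φ - Real.pi) (φ - ε), Real.sin ((φ - θ) / 2) ≠ 0 := by
    rintro θ ⟨h1, h2⟩
    exact sin_half_ne (by linarith) (by linarith)
  have hne2 : ∀ θ ∈ Set.Icc (φ + ε) (φ + Real.pi), Real.sin ((φ - θ) / 2) ≠ 0 := by
    rintro θ ⟨h1, h2⟩
    have h3 : (φ - θ) / 2 = -((θ - φ) / 2) := by ring
    rw [h3, Real.sin_neg]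
    exact neg_ne_zero.mpr (sin_half_ne (by linarith) (by linarith))
  have hcont1 : ContinuousOn
      (fun θ => rho M g gt γ θ * (Real.cos ((φ - θ) / 2) / Real.sin ((φ - θ) / 2)))
      (Set.Icc (φ - Real.pi) (φ - ε)) :=
    ((rho_cont M g gt γ).continuousOn).mul (ContinuousOn.div (by fun_prop) (by fun_prop) hne1)
  have hcont2 : ContinuousOn
      (fun θ => rho M g gt γ θ * (Real.cos ((φ - θ) / 2) / Real.sin ((φ - θ) / 2)))
      (Set.Icc (φ + ε) (φ + Real.pi)) :=
    ((rho_cont M g gt γ).continuousOn).mul (ContinuousOn.div (by fun_prop) (by fun_prop) hne2)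
  have hdisj : Disjoint (Set.Icc (φ - Real.pi) (φ - ε)) (Set.Icc (φ + ε) (φ + Real.pi)) := by
    apply Set.disjoint_left.mpr
    rintro θ ⟨_, h2⟩ ⟨h3, _⟩
    linarith
  rw [hset, MeasureTheory.setIntegral_union hdisj measurableSet_Icc
      (hcont1.integrableOn_compact isCompact_Icc) (hcont2.integrableOn_compact isCompact_Icc),
    MeasureTheory.integral_Icc_eq_integral_Ioc, MeasureTheory.integral_Icc_eq_integral_Ioc,
    ← intervalIntegral.integral_of_le (by linarith : φ - Real.pi ≤ φ - ε),
    ← intervalIntegral.integral_of_le (by linarith : φ + ε ≤ φ + Real.pi)]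
  have e1 := intervalIntegral.integral_comp_sub_left (a := φ - Real.pi) (b := φ - ε)
      (fun x => rho M g gt γ (φ - x) * (Real.cos (x / 2) / Real.sin (x / 2))) φ
  have e2 := intervalIntegral.integral_comp_sub_left (a := φ + ε) (b := φ + Real.pi)
      (fun x => rho M g gt γ (φ - x) * (Real.cos (x / 2) / Real.sin (x / 2))) φ
  simp only [sub_sub_cancel, sub_add_cancel_left] at e1 e2
  rw [e1, e2]
  have e3 := intervalIntegral.integral_comp_neg (a := ε) (b := Real.pi)
      (fun x => rho M g gt γ (φ - x) * (Real.cos (x / 2) / Real.sin (x / 2)))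
  rw [← e3]
  have hI1 : IntervalIntegrable
      (fun x => rho M g gt γ (φ - x) * (Real.cos (x / 2) / Real.sin (x / 2)))
      volume ε Real.pi := by
    apply ContinuousOn.intervalIntegrable
    rw [Set.uIcc_of_le hεπ.le]
    apply (((rho_cont M g gt γ).comp (by fun_prop)).continuousOn).mul
    apply ContinuousOn.div (by fun_prop) (by fun_prop)
    rintro x ⟨h1, h2⟩
    exact sin_half_ne (by linarith) (by linarith)
  have hI2 : IntervalIntegrable
      (fun x => rho M g gt γ (φ - -x) * (Real.cos (-x / 2) / Real.sin (-x / 2)))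
      volume ε Real.pi := by
    apply ContinuousOn.intervalIntegrable
    rw [Set.uIcc_of_le hεπ.le]
    apply (((rho_cont M g gt γ).comp (by fun_prop)).continuousOn).mul
    apply ContinuousOn.div (by fun_prop) (by fun_prop)
    rintro x ⟨h1, h2⟩
    have h3 : -x / 2 = -(x / 2) := by ring
    rw [h3, Real.sin_neg]
    exact neg_ne_zero.mpr (sin_half_ne (by linarith) (by linarith))
  rw [← intervalIntegral.integral_add hI1 hI2]
  have hEq : Set.EqOn
      (fun x => rho M g gt γ (φ - x) * (Real.cos (x / 2) / Real.sin (x / 2))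
        + rho M g gt γ (φ - -x) * (Real.cos (-x / 2) / Real.sin (-x / 2)))
      (fun x => ∑ n ∈ Finset.Icc 1 M,
        ((2 * γ / Real.pi) * (g n * Real.sin (n * φ) - gt n * Real.cos (n * φ))) * Dker n x)
      (Set.uIcc ε Real.pi) := by
    intro x hx
    rw [Set.uIcc_of_le hεπ.le] at hx
    obtain ⟨hx1, hx2⟩ := hx
    have hs : Real.sin (x / 2) ≠ 0 := sin_half_ne (lt_of_lt_of_le hε0 hx1) hx2
    simp only
    have hq : Real.cos (-x / 2) / Real.sin (-x / 2)
        = -(Real.cos (x / 2) / Real.sin (x / 2)) := by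
      rw [neg_div, Real.cos_neg, Real.sin_neg, div_neg]
    rw [sub_neg_eq_add, hq]
    have hdiff : rho M g gt γ (φ - x) - rho M g gt γ (φ + x)
        = ∑ n ∈ Finset.Icc 1 M,
            (2 * γ / Real.pi) * (g n * Real.sin (n * φ) - gt n * Real.cos (n * φ))
              * Real.sin (n * x) := by
      unfold rho
      have hAB : (∑ n ∈ Finset.Icc 1 M,
            (g n * Real.cos (n * (φ - x)) + gt n * Real.sin (n * (φ - x))))
          - (∑ n ∈ Finset.Icc 1 M,
            (g n * Real.cos (n * (φ + x)) + gt n * Real.sin (n * (φ + x))))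
          = ∑ n ∈ Finset.Icc 1 M,
            2 * (g n * Real.sin (n * φ) - gt n * Real.cos (n * φ)) * Real.sin (n * x) := by
        rw [← Finset.sum_sub_distrib]
        refine Finset.sum_congr rfl fun n _ => ?_
        rw [mul_sub, mul_add, Real.cos_sub, Real.sin_sub, Real.cos_add, Real.sin_add]
        ring
      have hstep : ∀ a b : ℝ,
          (1 / (2 * Real.pi)) * (1 + 2 * γ * a) - (1 / (2 * Real.pi)) * (1 + 2 * γ * b)
            = (γ / Real.pi) * (a - b) := by
        intro a b
        field_simp
        ring
      rw [hstep, hAB, Finset.mul_sum]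
      refine Finset.sum_congr rfl fun n _ => ?_
      field_simp
    have hfold : rho M g gt γ (φ - x) * (Real.cos (x / 2) / Real.sin (x / 2))
        + rho M g gt γ (φ + x) * -(Real.cos (x / 2) / Real.sin (x / 2))
        = (rho M g gt γ (φ - x) - rho M g gt γ (φ + x))
            * (Real.cos (x / 2) / Real.sin (x / 2)) := by ring
    rw [hfold, hdiff, Finset.sum_mul]
    refine Finset.sum_congr rfl fun n _ => ?_
    rw [← sin_mul_cot n hs]
    ring
  rw [intervalIntegral.integral_congr hEq,
    intervalIntegral.integral_finset_sum
      (fun n _ => ((Dker_cont n).intervalIntegrable _ _).const_mul _)]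
  simp_rw [intervalIntegral.integral_const_mul]

/-- The weak-coupling eigenvalue density
`ρ(φ) = (1/2π)[1 + 2γ Σ_{n=1}^M (g_n cos(nφ) + g̃_n sin(nφ))]`
is normalized on `[-π,π]` and solves the saddle point equation with the principal-value
cotangent kernel integral over one period. -/
theorem weak_coupling_density_saddle_point
    (M : ℕ) (hM : 1 ≤ M) (g gt : ℕ → ℝ) (γ : ℝ) (hγ : 0 ≤ γ) :
    ((∫ φ in (-Real.pi)..Real.pi,
        (1 / (2 * Real.pi)) *
          (1 + 2 * γ * ∑ n ∈ Finset.Icc 1 M,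
            (g n * Real.cos (n * φ) + gt n * Real.sin (n * φ)))) = 1) ∧
      ∀ φ : ℝ,
        Tendsto (fun ε : ℝ =>
            2 * γ * (∑ n ∈ Finset.Icc 1 M,
              (-(g n) * Real.sin (n * φ) + gt n * Real.cos (n * φ))) +
              ∫ θ in {θ : ℝ | ε ≤ |φ - θ| ∧ |φ - θ| ≤ Real.pi},
                ((1 / (2 * Real.pi)) *
                    (1 + 2 * γ * ∑ n ∈ Finset.Icc 1 M,
                      (g n * Real.cos (n * θ) + gt n * Real.sin (n * θ)))) *
                  (Real.cos ((φ - θ) / 2) / Real.sin ((φ - θ) / 2)))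
          (nhdsWithin 0 (Set.Ioi 0)) (nhds 0) := by
  constructor
  · exact rho_norm M g gt γ
  · intro φ
    have hπ0 : Real.pi ≠ 0 := Real.pi_ne_zero
    have htend : Tendsto (fun ε : ℝ =>
        2 * γ * (∑ n ∈ Finset.Icc 1 M,
          (-(g n) * Real.sin (n * φ) + gt n * Real.cos (n * φ))) +
        ∑ n ∈ Finset.Icc 1 M,
          ((2 * γ / Real.pi) * (g n * Real.sin (n * φ) - gt n * Real.cos (n * φ))) *
            ∫ x in ε..Real.pi, Dker n x) (nhdsWithin 0 (Set.Ioi 0)) (nhds 0) := by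
      have hL : Continuous (fun ε : ℝ =>
          2 * γ * (∑ n ∈ Finset.Icc 1 M,
            (-(g n) * Real.sin (n * φ) + gt n * Real.cos (n * φ))) +
          ∑ n ∈ Finset.Icc 1 M,
            ((2 * γ / Real.pi) * (g n * Real.sin (n * φ) - gt n * Real.cos (n * φ))) *
              ∫ x in ε..Real.pi, Dker n x) :=
        continuous_const.add
          (continuous_finset_sum _ fun n _ => continuous_const.mul (K_cont n))
      have hL0 : (2 * γ * (∑ n ∈ Finset.Icc 1 M,
            (-(g n) * Real.sin (n * φ) + gt n * Real.cos (n * φ))) +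
          ∑ n ∈ Finset.Icc 1 M,
            ((2 * γ / Real.pi) * (g n * Real.sin (n * φ) - gt n * Real.cos (n * φ))) *
              ∫ x in (0:ℝ)..Real.pi, Dker n x) = 0 := by
        have h1 : ∀ n ∈ Finset.Icc 1 M,
            ((2 * γ / Real.pi) * (g n * Real.sin (n * φ) - gt n * Real.cos (n * φ))) *
              (∫ x in (0:ℝ)..Real.pi, Dker n x)
            = 2 * γ * (g n * Real.sin (n * φ) - gt n * Real.cos (n * φ)) := by
          intro n hn
          rw [K_zero n (Finset.mem_Icc.mp hn).1]
          field_simp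
        rw [Finset.sum_congr rfl h1, Finset.mul_sum, ← Finset.sum_add_distrib]
        exact Finset.sum_eq_zero fun n _ => by ring
      have := (hL.tendsto 0).mono_left
        (nhdsWithin_le_nhds (s := Set.Ioi (0:ℝ)))
      rwa [hL0] at this
    refine Filter.Tendsto.congr' ?_ htend
    filter_upwards [Ioo_mem_nhdsGT_of_mem (Set.mem_Ico.mpr ⟨le_refl 0, Real.pi_pos⟩)]
      with ε hε
    have h := saddle_repr M g gt γ φ hε.1 hε.2
    unfold rho at h
    rw [h]
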